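/- Uniform lower bound on the thresholds: for every k ≥ 3 and every y ∈ [0,1], one has 1/6 ≤ g_k(y). -/

import Mathlib

open MeasureTheory Set Filter

/-- The value functions of the optimal online alternating-subsequence selection
problem: `v 0 y = 0` and
`v (k+1) y = y * v k y + ∫ x in y..1, max (v k y) (1 + v k (1 - x))`. -/
noncomputable def v : ℕ → ℝ → ℝ
  | 0, _ => 0
  | (k+1), y => y * v k y + ∫ x in y..(1:ℝ), max (v k y) (1 + v k (1 - x))

/-- The optimal threshold function:
`g k y = inf {x ∈ [y,1] : v (k-1) y ≤ 1 + v (k-1) (1-x)}`. -/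
noncomputable def g (k : ℕ) (y : ℝ) : ℝ :=
  sInf {x : ℝ | x ∈ Set.Icc y 1 ∧ v (k-1) y ≤ 1 + v (k-1) (1 - x)}

/-- The minimal fixed point `ξ k = inf {y ∈ [0,1] : g k y = y}`. -/
noncomputable def xi (k : ℕ) : ℝ :=
  sInf {y : ℝ | y ∈ Set.Icc (0:ℝ) 1 ∧ g k y = y}

lemma v_zero (y : ℝ) : v 0 y = 0 := rfl

lemma v_succ_def (k : ℕ) (y : ℝ) :
    v (k+1) y = y * v k y + ∫ x in y..(1:ℝ), max (v k y) (1 + v k (1 - x)) := rfl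

lemma v_cont (k : ℕ) : Continuous (v k) := by
  induction k with
  | zero => exact continuous_const
  | succ k ih =>
    have hF : Continuous (Function.uncurry fun (y x : ℝ) =>
        max (v k y) (1 + v k (1 - x))) := by
      apply Continuous.max
      · exact ih.comp continuous_fst
      · exact continuous_const.add (ih.comp (continuous_const.sub continuous_snd))
    have h2 : Continuous fun y : ℝ => ∫ x in (1:ℝ)..y, max (v k y) (1 + v k (1 - x)) :=
      intervalIntegral.continuous_parametric_intervalIntegral_of_continuous hF continuous_id
    have h3 : Continuous fun y : ℝ => ∫ x in y..(1:ℝ), max (v k y) (1 + v k (1 - x)) := by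
      have : (fun y : ℝ => ∫ x in y..(1:ℝ), max (v k y) (1 + v k (1 - x)))
          = fun y : ℝ => -∫ x in (1:ℝ)..y, max (v k y) (1 + v k (1 - x)) := by
        funext y; rw [intervalIntegral.integral_symm]
      rw [this]; exact h2.neg
    have : (fun y => v (k+1) y) = fun y =>
        y * v k y + ∫ x in y..(1:ℝ), max (v k y) (1 + v k (1 - x)) := rfl
    exact (continuous_id.mul ih).add h3

lemma v_succ (k : ℕ) (y : ℝ) :
    v (k+1) y = v k y + ∫ s in (0:ℝ)..(1-y), max 0 (1 + v k s - v k y) := by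
  have hsub : (∫ x in y..(1:ℝ), max 0 (1 + v k (1-x) - v k y))
      = ∫ s in (0:ℝ)..(1-y), max 0 (1 + v k s - v k y) := by
    have := intervalIntegral.integral_comp_sub_left (a := y) (b := (1:ℝ))
      (fun s => max 0 (1 + v k s - v k y)) 1
    simpa using this
  have hpt : ∀ x : ℝ, max (v k y) (1 + v k (1-x))
      = v k y + max 0 (1 + v k (1-x) - v k y) := by
    intro x
    rcases le_total (v k y) (1 + v k (1-x)) with h | h
    · rw [max_eq_right h, max_eq_right (by linarith)]; ring
    · rw [max_eq_left h, max_eq_left (by linarith)]; ring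
  have hint1 : IntervalIntegrable (fun x => max 0 (1 + v k (1-x) - v k y)) volume y 1 :=
    (Continuous.intervalIntegrable (by
      exact continuous_const.max ((continuous_const.add
        ((v_cont k).comp (continuous_const.sub continuous_id))).sub continuous_const)) _ _)
  calc v (k+1) y = y * v k y + ∫ x in y..(1:ℝ), max (v k y) (1 + v k (1 - x)) := rfl
    _ = y * v k y + ∫ x in y..(1:ℝ), (v k y + max 0 (1 + v k (1-x) - v k y)) := by
        congr 1; exact intervalIntegral.integral_congr (fun x _ => hpt x)
    _ = y * v k y + ((1 - y) * v k y + ∫ x in y..(1:ℝ), max 0 (1 + v k (1-x) - v k y)) := by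
        rw [intervalIntegral.integral_add (intervalIntegrable_const) hint1]
        simp [smul_eq_mul]
    _ = v k y + ∫ s in (0:ℝ)..(1-y), max 0 (1 + v k s - v k y) := by rw [hsub]; ring

lemma integrable_max (k : ℕ) (c a b : ℝ) :
    IntervalIntegrable (fun x => max c (1 + v k (1-x))) volume a b :=
  Continuous.intervalIntegrable
    (continuous_const.max (continuous_const.add
      ((v_cont k).comp (continuous_const.sub continuous_id)))) _ _

lemma integrable_max0 (k : ℕ) (c a b : ℝ) :
    IntervalIntegrable (fun s => max 0 (1 + v k s - c)) volume a b :=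
  Continuous.intervalIntegrable
    (continuous_const.max ((continuous_const.add (v_cont k)).sub continuous_const)) _ _

lemma v_anti (k : ℕ) : ∀ y z : ℝ, 0 ≤ y → y ≤ z → z ≤ 1 → v k z ≤ v k y := by
  induction k with
  | zero => intro y z _ _ _; simp [v_zero]
  | succ k ih =>
    intro y z h0 hyz h1
    have hc : v k z ≤ v k y := ih y z h0 hyz h1
    have step1 : v (k+1) z ≤ z * v k y + ∫ x in z..(1:ℝ), max (v k y) (1 + v k (1-x)) := by
      rw [v_succ_def]
      gcongr
      · exact (h0.trans hyz)
      · exact intervalIntegral.integral_mono_on h1 (integrable_max k _ _ _)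
          (integrable_max k _ _ _) (fun x _ => max_le_max hc le_rfl)
    have step2 : (z - y) * v k y ≤ ∫ x in y..z, max (v k y) (1 + v k (1-x)) := by
      have : (z - y) * v k y = ∫ _x in y..z, v k y := by
        rw [intervalIntegral.integral_const, smul_eq_mul]
      rw [this]
      exact intervalIntegral.integral_mono_on hyz intervalIntegrable_const
        (integrable_max k _ _ _) (fun x _ => le_max_left _ _)
    have step3 : (∫ x in y..z, max (v k y) (1 + v k (1-x)))
        + ∫ x in z..(1:ℝ), max (v k y) (1 + v k (1-x))
        = ∫ x in y..(1:ℝ), max (v k y) (1 + v k (1-x)) :=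
      intervalIntegral.integral_add_adjacent_intervals (integrable_max k _ _ _)
        (integrable_max k _ _ _)
    have : v (k+1) y = y * v k y + ∫ x in y..(1:ℝ), max (v k y) (1 + v k (1-x)) := rfl
    rw [this, ← step3]
    nlinarith [step1, step2]

lemma v_lip (k : ℕ) : ∀ y z : ℝ, 0 ≤ y → y ≤ z → z ≤ 1/2 →
    v k y - v k z ≤ 2 * (z - y) := by
  induction k with
  | zero => intro y z _ h _; simp [v_zero]; linarith
  | succ k ih =>
    intro y z h0 hyz hz2
    have hy2 : y ≤ 1/2 := hyz.trans hz2
    have hz0 : 0 ≤ z := h0.trans hyz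
    have hz1 : (1:ℝ) - z ≤ 1 - y := by linarith
    have hhalf : (1/2 : ℝ) ≤ 1 - z := by linarith
    set c₁ := v k y with hc₁
    set c₂ := v k z with hc₂
    have hc : c₂ ≤ c₁ := v_anti k y z h0 hyz (by linarith)
    have hΔ : c₁ - c₂ ≤ 2 * (z - y) := ih y z h0 hyz hz2
    -- pointwise positivity on [0, 1/2]
    have hpos : ∀ c : ℝ, c ≤ c₁ → ∀ s ∈ Set.uIcc (0:ℝ) (1/2),
        max 0 (1 + v k s - c) = 1 + v k s - c := by
      intro c hcc s hs
      rw [Set.uIcc_of_le (by norm_num : (0:ℝ) ≤ 1/2)] at hs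
      have h1 : v k (1/2) ≤ v k s := v_anti k s (1/2) hs.1 hs.2 (by norm_num)
      have h2 : v k y - v k (1/2) ≤ 2 * (1/2 - y) := ih y (1/2) h0 hy2 le_rfl
      exact max_eq_right (by simp only [hc₁] at *; linarith)
    have hA1 : (∫ s in (0:ℝ)..(1/2), max 0 (1 + v k s - c₁))
        = (∫ s in (0:ℝ)..(1/2), (1 + v k s)) - (1/2) * c₁ := by
      rw [intervalIntegral.integral_congr (hpos c₁ le_rfl)]
      rw [show (fun s => 1 + v k s - c₁) = fun s => (1 + v k s) - c₁ from rfl,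
        intervalIntegral.integral_sub (Continuous.intervalIntegrable
          (show Continuous (fun s => 1 + v k s) from continuous_const.add (v_cont k)) _ _)
          intervalIntegrable_const,
        intervalIntegral.integral_const, smul_eq_mul]
      ring
    have hA2 : (∫ s in (0:ℝ)..(1/2), max 0 (1 + v k s - c₂))
        = (∫ s in (0:ℝ)..(1/2), (1 + v k s)) - (1/2) * c₂ := by
      rw [intervalIntegral.integral_congr (hpos c₂ hc)]
      rw [show (fun s => 1 + v k s - c₂) = fun s => (1 + v k s) - c₂ from rfl,
        intervalIntegral.integral_sub (Continuous.intervalIntegrable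
          (show Continuous (fun s => 1 + v k s) from continuous_const.add (v_cont k)) _ _)
          intervalIntegrable_const,
        intervalIntegral.integral_const, smul_eq_mul]
      ring
    have hB : (∫ s in (1/2 : ℝ)..(1-z), max 0 (1 + v k s - c₁))
        ≤ ∫ s in (1/2 : ℝ)..(1-z), max 0 (1 + v k s - c₂) :=
      intervalIntegral.integral_mono_on hhalf (integrable_max0 k _ _ _)
        (integrable_max0 k _ _ _)
        (fun s _ => max_le_max le_rfl (by linarith))
    have hC : (∫ s in (1-z : ℝ)..(1-y), max 0 (1 + v k s - c₁)) ≤ z - y := by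
      have : (∫ s in (1-z : ℝ)..(1-y), (1:ℝ)) = z - y := by
        rw [intervalIntegral.integral_const, smul_eq_mul]; ring
      rw [← this]
      refine intervalIntegral.integral_mono_on hz1 (integrable_max0 k _ _ _)
        intervalIntegrable_const (fun s hs => ?_)
      have hs1 : v k s ≤ v k y := v_anti k y s h0 (by linarith [hs.1]) (by linarith [hs.2])
      exact max_le (by norm_num) (by simp only [hc₁] at *; linarith)
    have hsplit1 : (∫ s in (0:ℝ)..(1-y), max 0 (1 + v k s - c₁))
        = (∫ s in (0:ℝ)..(1/2), max 0 (1 + v k s - c₁))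
          + (∫ s in (1/2:ℝ)..(1-z), max 0 (1 + v k s - c₁))
          + (∫ s in (1-z:ℝ)..(1-y), max 0 (1 + v k s - c₁)) := by
      rw [intervalIntegral.integral_add_adjacent_intervals (integrable_max0 k _ _ _)
          (integrable_max0 k _ _ _),
        intervalIntegral.integral_add_adjacent_intervals (integrable_max0 k _ _ _)
          (integrable_max0 k _ _ _)]
    have hsplit2 : (∫ s in (0:ℝ)..(1-z), max 0 (1 + v k s - c₂))
        = (∫ s in (0:ℝ)..(1/2), max 0 (1 + v k s - c₂))
          + (∫ s in (1/2:ℝ)..(1-z), max 0 (1 + v k s - c₂)) :=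
      (intervalIntegral.integral_add_adjacent_intervals (integrable_max0 k _ _ _)
          (integrable_max0 k _ _ _)).symm
    rw [v_succ, v_succ, ← hc₁, ← hc₂, hsplit1, hsplit2, hA1, hA2]
    linarith

lemma v_one (y : ℝ) : v 1 y = 1 - y := by
  have : v 1 y = y * v 0 y + ∫ x in y..(1:ℝ), max (v 0 y) (1 + v 0 (1-x)) := rfl
  rw [this]
  simp [v_zero]

lemma v_two (y : ℝ) (h0 : 0 ≤ y) (h1 : y ≤ 1) : v 2 y = 3/2 * (1 - y^2) := by
  have hdef : v 2 y = y * v 1 y + ∫ x in y..(1:ℝ), max (v 1 y) (1 + v 1 (1-x)) := rfl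
  have hcong : (∫ x in y..(1:ℝ), max (v 1 y) (1 + v 1 (1-x)))
      = ∫ x in y..(1:ℝ), (1 + x) := by
    refine intervalIntegral.integral_congr (fun x hx => ?_)
    rw [Set.uIcc_of_le h1] at hx
    rw [v_one, v_one]
    have : 1 - (1 - x) = x := by ring
    rw [this]
    exact max_eq_right (by linarith [hx.1])
  have hval : (∫ x in y..(1:ℝ), (1 + x)) = (1 - y) + (1 - y^2)/2 := by
    have := intervalIntegral.integral_comp_add_left (a := y) (b := (1:ℝ))
      (fun x : ℝ => x) 1
    rw [this, integral_id]
    ring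
  rw [hdef, hcong, hval, v_one]
  ring

lemma key : ∀ m : ℕ, 2 ≤ m → ∀ t : ℝ, 0 ≤ t → t ≤ 1/6 →
    3/2 * (1 - 2*t) ≤ v m t - v m (1-t) := by
  intro m hm
  induction m, hm using Nat.le_induction with
  | base =>
    intro t ht0 ht6
    rw [v_two t ht0 (by linarith), v_two (1-t) (by linarith) (by linarith)]
    ring_nf
    nlinarith [sq_nonneg t]
  | succ m hm ih =>
    intro t ht0 ht6
    have hD := ih t ht0 ht6
    set A := v m t with hA
    set B := v m (1-t) with hB
    have hAB : B ≤ A := v_anti m t (1-t) ht0 (by linarith) (by linarith)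
    -- upper bound for the (1-t) integral
    have hU : (∫ s in (0:ℝ)..t, max 0 (1 + v m s - B)) ≤ t + t^2 + t*(A-B) := by
      have hmono : (∫ s in (0:ℝ)..t, max 0 (1 + v m s - B))
          ≤ ∫ s in (0:ℝ)..t, ((1 + 2*t + (A-B)) - 2*s) := by
        refine intervalIntegral.integral_mono_on ht0 (integrable_max0 m _ _ _)
          (Continuous.intervalIntegrable (by fun_prop) _ _) (fun s hs => ?_)
        have hlip : v m s - A ≤ 2*(t - s) := v_lip m s t hs.1 hs.2 (by linarith)
        refine max_le (by nlinarith [hs.1, hs.2]) (by linarith)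
      have hval : (∫ s in (0:ℝ)..t, ((1 + 2*t + (A-B)) - 2*s)) = t + t^2 + t*(A-B) := by
        rw [intervalIntegral.integral_sub intervalIntegrable_const
          (Continuous.intervalIntegrable (by fun_prop) _ _),
          intervalIntegral.integral_const, intervalIntegral.integral_const_mul,
          integral_id, smul_eq_mul]
        ring
      linarith
    -- lower bound for the t integral
    have hL1 : (t : ℝ) ≤ ∫ s in (0:ℝ)..t, max 0 (1 + v m s - A) := by
      have heq : (∫ s in (0:ℝ)..t, (1:ℝ)) = t := by
        rw [intervalIntegral.integral_const, smul_eq_mul]; ring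
      calc t = ∫ s in (0:ℝ)..t, (1:ℝ) := heq.symm
        _ ≤ _ := by
          refine intervalIntegral.integral_mono_on ht0 intervalIntegrable_const
            (integrable_max0 m _ _ _) (fun s hs => ?_)
          have : A ≤ v m s := v_anti m s t hs.1 hs.2 (by linarith)
          exact le_trans (by linarith) (le_max_right _ _)
    have hL2 : (1/4 - t^2 : ℝ) ≤ ∫ s in t..(1/2:ℝ), max 0 (1 + v m s - A) := by
      have hval : (∫ s in t..(1/2:ℝ), ((1 + 2*t) - 2*s)) = 1/4 - t^2 := by
        rw [intervalIntegral.integral_sub intervalIntegrable_const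
          (Continuous.intervalIntegrable (by fun_prop) _ _),
          intervalIntegral.integral_const, intervalIntegral.integral_const_mul,
          integral_id, smul_eq_mul]
        ring
      rw [← hval]
      refine intervalIntegral.integral_mono_on (by linarith) (Continuous.intervalIntegrable
        (by fun_prop) _ _) (integrable_max0 m _ _ _) (fun s hs => ?_)
      have hlip : A - v m s ≤ 2*(s - t) := v_lip m t s ht0 hs.1 hs.2
      exact le_trans (by linarith) (le_max_right _ _)
    have hL3 : (0:ℝ) ≤ ∫ s in (1/2:ℝ)..(1-t), max 0 (1 + v m s - A) :=
      intervalIntegral.integral_nonneg (by linarith) (fun s _ => le_max_left _ _)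
    have hsplit : (∫ s in (0:ℝ)..(1-t), max 0 (1 + v m s - A))
        = (∫ s in (0:ℝ)..t, max 0 (1 + v m s - A))
          + (∫ s in t..(1/2:ℝ), max 0 (1 + v m s - A))
          + (∫ s in (1/2:ℝ)..(1-t), max 0 (1 + v m s - A)) := by
      rw [intervalIntegral.integral_add_adjacent_intervals (integrable_max0 m _ _ _)
          (integrable_max0 m _ _ _),
        intervalIntegral.integral_add_adjacent_intervals (integrable_max0 m _ _ _)
          (integrable_max0 m _ _ _)]
    have e1 : v (m+1) t = A + ∫ s in (0:ℝ)..(1-t), max 0 (1 + v m s - A) := v_succ m t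
    have e2 : v (m+1) (1-t) = B + ∫ s in (0:ℝ)..t, max 0 (1 + v m s - B) := by
      have h := v_succ m (1-t)
      rw [show (1 - (1-t) : ℝ) = t by ring] at h
      exact h
    rw [e1, e2, hsplit]
    nlinarith [mul_nonneg (sub_nonneg.2 hD) (show (0:ℝ) ≤ 1 - t by linarith), sq_nonneg t]

/-- Uniform lower bound on the thresholds: for `k ≥ 3`, `1/6 ≤ g k y`. -/
theorem threshold_lower_bound :
    ∀ k : ℕ, 3 ≤ k → ∀ y : ℝ, y ∈ Set.Icc (0:ℝ) 1 → (1/6 : ℝ) ≤ g k y := by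
  intro k hk y hy
  obtain ⟨hy0, hy1⟩ := hy
  set m := k - 1 with hmdef
  have hm : 2 ≤ m := by omega
  unfold g
  refine le_csInf ⟨1, ?_⟩ ?_
  · refine ⟨⟨hy1, le_rfl⟩, ?_⟩
    have h1 : v m y ≤ v m 0 := v_anti m 0 y le_rfl hy0 hy1
    simpa using by linarith
  · rintro x ⟨⟨hyx, hx1⟩, hmem⟩
    by_contra hcon
    push_neg at hcon
    have hx0 : 0 ≤ x := hy0.trans hyx
    have hkey : 3/2 * (1 - 2*x) ≤ v m x - v m (1-x) := key m hm x hx0 (le_of_lt hcon)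
    have hmono : v m x ≤ v m y := v_anti m y x hy0 hyx (by linarith)
    have : (1:ℝ) < 3/2 * (1 - 2*x) := by linarith
    linarith
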